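/- For every odd integer k ≥ 3, there exists a nonzero balanced kernel U such that t^{C_ℓ}_U(x) = 0 for every odd integer ℓ with 3 ≤ ℓ ≤ k and every x ∈ [0,1]. In particular, t(C_ℓ, U) = 0 for every odd integer ℓ with 3 ≤ ℓ ≤ k. -/

import Mathlib

open MeasureTheory

/-- A kernel: a bounded measurable symmetric real function (its values on `[0,1]²` are the
relevant ones). -/
structure Kernel : Type where
  toFun : ℝ → ℝ → ℝ
  symm : ∀ x y, toFun x y = toFun y x
  measurable : Measurable (Function.uncurry toFun)
  bounded : ∃ C : ℝ, ∀ x y, |toFun x y| ≤ C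

/-- A kernel is nonzero if it is not a.e. zero on `[0,1]²`. -/
def Kernel.Nonzero (U : Kernel) : Prop :=
  ¬ (∀ᵐ p : ℝ × ℝ ∂(volume.restrict ((Set.Icc (0:ℝ) 1) ×ˢ (Set.Icc (0:ℝ) 1))),
      U.toFun p.1 p.2 = 0)

/-- A kernel is balanced if its marginals vanish a.e. -/
def Kernel.Balanced (U : Kernel) : Prop :=
  ∀ᵐ x ∂(volume.restrict (Set.Icc (0:ℝ) 1)), (∫ y in Set.Icc (0:ℝ) 1, U.toFun x y) = 0

/-- The product of the kernel values over the edges of a graph. -/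
noncomputable def edgeProd {V : Type} (H : SimpleGraph V) (U : Kernel) (x : V → ℝ) : ℝ :=
  ∏ᶠ e ∈ H.edgeSet, Sym2.lift ⟨fun u v => U.toFun (x u) (x v), fun u v => U.symm (x u) (x v)⟩ e

/-- The homomorphism density `t(H, U)` of a finite simple graph in a kernel. -/
noncomputable def homDensity {V : Type} [Fintype V] (H : SimpleGraph V) (U : Kernel) : ℝ :=
  ∫ x in (Set.univ.pi fun _ : V => Set.Icc (0:ℝ) 1), edgeProd H U x

open Classical in
/-- The rooted homomorphism density `t^H_U(z)` of a graph `H` rooted at `w`. -/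
noncomputable def rootedDensity {V : Type} [Fintype V] (H : SimpleGraph V) (w : V)
    (U : Kernel) (z : ℝ) : ℝ :=
  ∫ x in (Set.univ.pi fun _ : {v : V // v ≠ w} => Set.Icc (0:ℝ) 1),
    edgeProd H U (fun v => if h : v = w then z else x ⟨v, h⟩)

/-- A bundled finite simple graph. -/
structure FinGraph : Type 1 where
  V : Type
  fintypeV : Fintype V
  G : SimpleGraph V

attribute [instance] FinGraph.fintypeV

def FinGraph.of {V : Type} [h : Fintype V] (G : SimpleGraph V) : FinGraph := ⟨V, h, G⟩

noncomputable def FinGraph.density (G : FinGraph) (U : Kernel) : ℝ := homDensity G.G U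

/-- Number of edges of a bundled finite graph. -/
noncomputable def FinGraph.edges (G : FinGraph) : ℕ := G.G.edgeSet.ncard

instance finiteSubgraph {V : Type} [Finite V] (G : SimpleGraph V) : Finite G.Subgraph := by
  classical
  exact Finite.of_injective (fun G' => (G'.verts, G'.Adj))
    (fun a b h => SimpleGraph.Subgraph.ext (congrArg Prod.fst h) (congrArg Prod.snd h))

open Classical in
/-- The multiset of all subgraphs of `G` having exactly `l` edges. -/
noncomputable def FinGraph.subs (G : FinGraph) (l : ℕ) : Multiset FinGraph :=
  ((Set.toFinite {G' : G.G.Subgraph | G'.edgeSet.ncard = l}).toFinset.val).map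
    fun G' => FinGraph.of G'.coe

/-- `D` is an `l`-deck: a multiset of graphs each with exactly `l` edges. -/
def IsDeck (D : Multiset FinGraph) (l : ℕ) : Prop := ∀ G ∈ D, G.edges = l

/-- The `l`-deck of a deck `D`: all `l`-edge subgraphs of the graphs of `D`. -/
noncomputable def subDeck (D : Multiset FinGraph) (l : ℕ) : Multiset FinGraph :=
  D.bind fun G => G.subs l

/-- `s_D(H)`: the number of subgraphs isomorphic to `H` of the graphs in `D`. -/
noncomputable def sD (D : Multiset FinGraph) (H : FinGraph) : ℕ :=
  (D.map fun G => Set.ncard {G' : G.G.Subgraph | Nonempty (G'.coe ≃g H.G)}).sum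

/-- The coefficient `c^D_{U,l} = Σ_{G ∈ D} Σ_{H' ∈ G[l]} t(H', U)`. -/
noncomputable def coeff (D : Multiset FinGraph) (U : Kernel) (l : ℕ) : ℝ :=
  ((subDeck D l).map fun H => H.density U).sum

/-- All the coefficients `c^D_{U,2}, c^D_{U,4}, …, c^D_{U,l}` vanish. -/
def AllCoeffZero (D : Multiset FinGraph) (U : Kernel) (l : ℕ) : Prop :=
  ∀ k, Even k → 0 < k → k ≤ l → coeff D U k = 0

/-- Among `c^D_{U,2}, c^D_{U,4}, …, c^D_{U,l}` not all vanish and the first nonzero one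
is positive. -/
def FirstNonzeroPos (D : Multiset FinGraph) (U : Kernel) (l : ℕ) : Prop :=
  ∃ k, Even k ∧ 0 < k ∧ k ≤ l ∧ 0 < coeff D U k ∧
    ∀ j, Even j → 0 < j → j < k → coeff D U j = 0

/-- Among `c^D_{U,2}, c^D_{U,4}, …, c^D_{U,l}` not all vanish and the first nonzero one
is negative. -/
def FirstNonzeroNeg (D : Multiset FinGraph) (U : Kernel) (l : ℕ) : Prop :=
  ∃ k, Even k ∧ 0 < k ∧ k ≤ l ∧ coeff D U k < 0 ∧
    ∀ j, Even j → 0 < j → j < k → coeff D U j = 0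

def ClassI (D : Multiset FinGraph) (l : ℕ) : Prop :=
  ∀ U : Kernel, U.Nonzero → FirstNonzeroPos D U l

def ClassII (D : Multiset FinGraph) (l : ℕ) : Prop :=
  ∃ U : Kernel, FirstNonzeroNeg D U l

def ClassIII (D : Multiset FinGraph) (l : ℕ) : Prop :=
  (∃ U : Kernel, U.Nonzero ∧ AllCoeffZero D U l) ∧
  ∀ U : Kernel, AllCoeffZero D U l ∨ FirstNonzeroPos D U l

/-- The cycle `C_n` as a bundled graph. -/
def cycleF (n : ℕ) : FinGraph := FinGraph.of (SimpleGraph.cycleGraph n)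

/-- The path `P_n` with `n` edges as a bundled graph. -/
def pathF (n : ℕ) : FinGraph := FinGraph.of (SimpleGraph.pathGraph (n+1))

/-- Gluing two graphs by identifying the vertex `v` of `G` with the vertex `w` of `H`. -/
def glue {V W : Type} (G : SimpleGraph V) (H : SimpleGraph W) (v : V) (w : W) :
    SimpleGraph (V ⊕ {x : W // x ≠ w}) where
  Adj a b :=
    Sum.elim (fun a => Sum.elim (fun b => G.Adj a b) (fun b => a = v ∧ H.Adj w b.1) b)
             (fun a => Sum.elim (fun b => b = v ∧ H.Adj w a.1) (fun b => H.Adj a.1 b.1) b) a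
  symm := by
    constructor
    rintro (a | a) (b | b) h
    · exact G.symm.symm _ _ h
    · exact h
    · exact h
    · exact H.symm.symm _ _ h
  loopless := by
    constructor
    rintro (a | a) h
    · exact G.loopless.irrefl a h
    · exact H.loopless.irrefl a.1 h

/-- Disjoint union of two simple graphs. -/
def disjSum {V W : Type} (G : SimpleGraph V) (H : SimpleGraph W) : SimpleGraph (V ⊕ W) where
  Adj a b :=
    Sum.elim (fun a => Sum.elim (fun b => G.Adj a b) (fun _ => False) b)
             (fun a => Sum.elim (fun _ => False) (fun b => H.Adj a b) b) a
  symm := by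
    constructor
    rintro (a | a) (b | b) h
    · exact G.symm.symm _ _ h
    · exact h.elim
    · exact h.elim
    · exact H.symm.symm _ _ h
  loopless := by
    constructor
    rintro (a | a) h
    · exact G.loopless.irrefl a h
    · exact H.loopless.irrefl a h

/-- Disjoint union `G ∪ H` of bundled graphs. -/
noncomputable def FinGraph.disjU (G H : FinGraph) : FinGraph := FinGraph.of (disjSum G.G H.G)

open Classical in
/-- `C_k ⊕ P_n ⊕ C_l`: two cycles joined by a path with `n` edges; for `n = 0` this is
`C_k ⊕ C_l`, two cycles sharing one vertex. (Junk value if `k = 0` or `l = 0`.) -/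
noncomputable def cpcF (k n l : ℕ) : FinGraph :=
  if h : 0 < k ∧ 0 < l then
    let A := glue (SimpleGraph.cycleGraph k) (SimpleGraph.pathGraph (n+1)) ⟨0, h.1⟩ 0
    let ep : Fin k ⊕ {x : Fin (n+1) // x ≠ 0} :=
      if hn : n = 0 then Sum.inl ⟨0, h.1⟩
      else Sum.inr ⟨Fin.last n, fun hc => hn (by simpa using congrArg Fin.val hc)⟩
    FinGraph.of (glue A (SimpleGraph.cycleGraph l) ep ⟨0, h.2⟩)
  else FinGraph.of (⊥ : SimpleGraph (Fin 0))



/-!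
The kernel `U(x, y) = sin (4πx) sin (4πy)` for `x`, `y` on different sides of `1/2`, and
`U(x, y) = 0` otherwise, works for every `k`. It is supported on the "bipartite" region, so on any
configuration on which all edge factors of a graph are nonzero, the side of `1/2` gives a proper
2-colouring; odd cycles have none, so the integrand of their (rooted) densities vanishes
identically. It is balanced because `sin (4π·)` runs through a full period on each half
of `[0, 1]`.
-/

open Real SimpleGraph

theorem edgeProd_eq_zero_of_not_colorable {V : Type} [Finite V] {H : SimpleGraph V}
    (hH : ¬ H.Colorable 2) {U : Kernel} {A : Set ℝ}
    (hU : ∀ x y, (x ∈ A ↔ y ∈ A) → U.toFun x y = 0) (x : V → ℝ) :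
    edgeProd H U x = 0 := by
  classical
  by_contra hne
  refine hH (Coloring.colorable (α := Bool) (Coloring.mk (fun v => decide (x v ∈ A)) ?_))
  intro u v huv hcol
  rw [edgeProd, finprod_mem_eq_finite_toFinset_prod _ (Set.toFinite _)] at hne
  exact hne (Finset.prod_eq_zero (i := s(u, v)) (by simpa using huv)
    (hU _ _ (decide_eq_decide.mp hcol)))

theorem homDensity_eq_zero_of_not_colorable {V : Type} [Fintype V] {H : SimpleGraph V}
    (hH : ¬ H.Colorable 2) {U : Kernel} {A : Set ℝ}
    (hU : ∀ x y, (x ∈ A ↔ y ∈ A) → U.toFun x y = 0) : homDensity H U = 0 := by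
  simp [homDensity, edgeProd_eq_zero_of_not_colorable hH hU]

theorem rootedDensity_eq_zero_of_not_colorable {V : Type} [Fintype V] {H : SimpleGraph V}
    (hH : ¬ H.Colorable 2) {U : Kernel} {A : Set ℝ}
    (hU : ∀ x y, (x ∈ A ↔ y ∈ A) → U.toFun x y = 0) (w : V) (z : ℝ) :
    rootedDensity H w U z = 0 := by
  simp [rootedDensity, edgeProd_eq_zero_of_not_colorable hH hU]

theorem not_colorable_two_cycleGraph_of_odd {n : ℕ} (hn : Odd n) (h2 : 2 ≤ n) :
    ¬ (cycleGraph n).Colorable 2 := fun hc => by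
  have := hc.chromaticNumber_le
  rw [chromaticNumber_cycleGraph_of_odd n h2 hn] at this
  norm_num at this

theorem Kernel.nonzero_of_ne_zero_on {U : Kernel} {s t : Set ℝ} (hs : MeasurableSet s)
    (ht : MeasurableSet t) (hs01 : s ⊆ Set.Icc 0 1) (ht01 : t ⊆ Set.Icc 0 1)
    (hs0 : volume s ≠ 0) (ht0 : volume t ≠ 0)
    (hst : ∀ x ∈ s, ∀ y ∈ t, U.toFun x y ≠ 0) :
    U.Nonzero := by
  intro h
  have hR : ∀ᵐ p : ℝ × ℝ ∂(volume.restrict (s ×ˢ t)), False := by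
    filter_upwards [ae_restrict_of_ae_restrict_of_subset (Set.prod_mono hs01 ht01) h,
      ae_restrict_mem (hs.prod ht)] with p hp hmem
    exact hst _ hmem.1 _ hmem.2 hp
  rw [Filter.eventually_false_iff_eq_bot, ae_eq_bot, Measure.restrict_eq_zero,
    Measure.volume_eq_prod, Measure.prod_prod] at hR
  exact mul_ne_zero hs0 ht0 hR

theorem integral_sin_four_pi_mul_of_sub_eq_half {a b : ℝ} (hab : b = a + 1 / 2) :
    ∫ y in a..b, sin (4 * π * y) = 0 := by
  have hb : 4 * π * b = 4 * π * a + 2 * π := by rw [hab]; ring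
  rw [intervalIntegral.integral_comp_mul_left _ (by positivity), integral_sin, hb,
    cos_add_two_pi, sub_self, smul_zero]

noncomputable def crossSinKernel : Kernel where
  toFun x y :=
    if (x ∈ Set.Iio (1 / 2 : ℝ) ↔ y ∈ Set.Iio (1 / 2 : ℝ)) then 0
    else sin (4 * π * x) * sin (4 * π * y)
  symm x y := if_congr Iff.comm rfl (mul_comm _ _)
  measurable := by
    refine Measurable.ite ?_ measurable_const (by fun_prop)
    exact ((measurableSet_Iio.preimage measurable_fst).iff
      (measurableSet_Iio.preimage measurable_snd))
  bounded := ⟨1, fun x y => by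
    split_ifs
    · simp
    · rw [abs_mul]
      exact mul_le_one₀ (abs_sin_le_one _) (abs_nonneg _) (abs_sin_le_one _)⟩

theorem crossSinKernel_apply (x y : ℝ) :
    crossSinKernel.toFun x y =
      if (x ∈ Set.Iio (1 / 2 : ℝ) ↔ y ∈ Set.Iio (1 / 2 : ℝ)) then 0
      else sin (4 * π * x) * sin (4 * π * y) :=
  rfl

theorem crossSinKernel_apply_of_same_side {x y : ℝ}
    (h : x ∈ Set.Iio (1 / 2 : ℝ) ↔ y ∈ Set.Iio (1 / 2 : ℝ)) :
    crossSinKernel.toFun x y = 0 :=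
  if_pos h

theorem crossSinKernel_nonzero : crossSinKernel.Nonzero := by
  refine Kernel.nonzero_of_ne_zero_on (s := Set.Ioo 0 (1 / 4)) (t := Set.Ioo (1 / 2) (3 / 4))
    measurableSet_Ioo measurableSet_Ioo
    (Set.Ioo_subset_Icc_self.trans (Set.Icc_subset_Icc le_rfl (by norm_num)))
    (Set.Ioo_subset_Icc_self.trans (Set.Icc_subset_Icc (by norm_num) (by norm_num)))
    (by simp) (by norm_num) ?_
  rintro x ⟨hx0, hx1⟩ y ⟨hy0, hy1⟩
  have hsx : 0 < sin (4 * π * x) :=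
    sin_pos_of_pos_of_lt_pi (by positivity) (by nlinarith [pi_pos])
  have hsy : 0 < sin (4 * π * y) := by
    rw [← sin_sub_two_pi]
    exact sin_pos_of_pos_of_lt_pi (by nlinarith [pi_pos]) (by nlinarith [pi_pos])
  have hside : ¬(x ∈ Set.Iio (1 / 2 : ℝ) ↔ y ∈ Set.Iio (1 / 2 : ℝ)) :=
    fun h => (h.1 (show x < 1 / 2 by linarith)).not_gt hy0
  rw [crossSinKernel_apply, if_neg hside]
  positivity

theorem integral_crossSinKernel (x : ℝ) :
    ∫ y in Set.Icc (0 : ℝ) 1, crossSinKernel.toFun x y = 0 := by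
  by_cases hx : x ∈ Set.Iio (1 / 2)
  · have hU : ∀ y, crossSinKernel.toFun x y =
        (Set.Ici (1 / 2)).indicator (fun y => sin (4 * π * x) * sin (4 * π * y)) y := by
      intro y
      by_cases hy : y ∈ Set.Iio (1 / 2)
      · rw [crossSinKernel_apply, if_pos (iff_of_true hx hy),
          Set.indicator_of_notMem (s := Set.Ici (1 / 2)) (not_le.2 hy)]
      · rw [crossSinKernel_apply, if_neg (fun h => hy (h.1 hx)),
          Set.indicator_of_mem (s := Set.Ici (1 / 2)) (not_lt.1 hy)]
    have hI : Set.Ici (1 / 2) ∩ Set.Icc 0 1 = Set.Icc (1 / 2 : ℝ) 1 := by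
      ext y; simp only [Set.mem_inter_iff, Set.mem_Ici, Set.mem_Icc]
      exact ⟨fun h => ⟨h.1, h.2.2⟩, fun h => ⟨h.1, by linarith [h.1], h.2⟩⟩
    simp_rw [hU]
    rw [integral_indicator measurableSet_Ici, Measure.restrict_restrict measurableSet_Ici, hI,
      integral_const_mul, integral_Icc_eq_integral_Ioc,
      ← intervalIntegral.integral_of_le (by norm_num),
      integral_sin_four_pi_mul_of_sub_eq_half (by norm_num), mul_zero]
  · have hU : ∀ y, crossSinKernel.toFun x y =
        (Set.Iio (1 / 2)).indicator (fun y => sin (4 * π * x) * sin (4 * π * y)) y := by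
      intro y
      by_cases hy : y ∈ Set.Iio (1 / 2)
      · rw [crossSinKernel_apply, if_neg (fun h => hx (h.2 hy)), Set.indicator_of_mem hy]
      · rw [crossSinKernel_apply, if_pos (iff_of_false hx hy), Set.indicator_of_notMem hy]
    have hI : Set.Iio (1 / 2) ∩ Set.Icc 0 1 = Set.Ico (0 : ℝ) (1 / 2) := by
      ext y; simp only [Set.mem_inter_iff, Set.mem_Iio, Set.mem_Icc, Set.mem_Ico]
      exact ⟨fun h => ⟨h.2.1, h.1⟩, fun h => ⟨h.2, h.1, by linarith [h.2]⟩⟩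
    simp_rw [hU]
    rw [integral_indicator measurableSet_Iio, Measure.restrict_restrict measurableSet_Iio, hI,
      integral_const_mul, integral_Ico_eq_integral_Ioo, ← integral_Ioc_eq_integral_Ioo,
      ← intervalIntegral.integral_of_le (by norm_num),
      integral_sin_four_pi_mul_of_sub_eq_half (by norm_num), mul_zero]

theorem crossSinKernel_balanced : crossSinKernel.Balanced :=
  ae_of_all _ integral_crossSinKernel

/-- For every odd `k ≥ 3`, there exists a nonzero balanced kernel `U` such that
the rooted density `t^{C_ℓ}_U(x)` vanishes for every odd `3 ≤ ℓ ≤ k` and every `x ∈ [0,1]`;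
in particular `t(C_ℓ, U) = 0` for every odd `3 ≤ ℓ ≤ k`. -/
theorem core_cycle (k : ℕ) :
    ∃ U : Kernel, U.Nonzero ∧ U.Balanced ∧
      (∀ l : ℕ, ∀ _ : Odd l, ∀ _ : 3 ≤ l, ∀ _ : l ≤ k, ∀ x ∈ Set.Icc (0:ℝ) 1,
        rootedDensity (SimpleGraph.cycleGraph l) ⟨0, by omega⟩ U x = 0) ∧
      (∀ l : ℕ, Odd l → 3 ≤ l → l ≤ k →
        homDensity (SimpleGraph.cycleGraph l) U = 0) := by
  have hcycle {l : ℕ} (hl : Odd l) (hl3 : 3 ≤ l) : ¬ (cycleGraph l).Colorable 2 :=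
    not_colorable_two_cycleGraph_of_odd hl (by omega)
  refine ⟨crossSinKernel, crossSinKernel_nonzero, crossSinKernel_balanced, ?_, ?_⟩
  · intro l hl hl3 _ x _
    exact rootedDensity_eq_zero_of_not_colorable (hcycle hl hl3)
      (fun _ _ => crossSinKernel_apply_of_same_side) _ _
  · intro l hl hl3 _
    exact homDensity_eq_zero_of_not_colorable (hcycle hl hl3)
      (fun _ _ => crossSinKernel_apply_of_same_side)
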